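/- (Binning collision bound in the dual protocol.) In Protocol A under the alternative hypothesis (φ = q_{X,Z_1,Z_2}), for detector j ∈ {1,2} let 𝓔_{j,NS,0} be the event that there exist ỹ_0^n ≠ Y_0^n and ỹ_j^n ≠ Y_j^n with 𝓑_{M,0}(ỹ_0^n)=M_0, 𝓑_{F,0}(ỹ_0^n)=F_0, 𝓑_{M,j}(ỹ_j^n)=M_j, 𝓑_{F,j}(ỹ_j^n)=F_j and the joint type of (ỹ_0^n, ỹ_j^n, Z_j^n) within δ′_n of p_{Y_0,Y_j,Z_j}, and let Ψ_{0,j} be the event that the type of Z_j^n is within δ′_n of p_{Z_j}. Then P_q( 𝓔_{j,NS,0} | 𝓔_0 ∧ Ψ_{0,j} ) ≤ 2^{−n·( R_0 + R̃_0 + R_j + R̃_j − H(Y_0, Y_j | Z_j) − η_{0,n} )}, where H(Y_0,Y_j|Z_j) is the conditional entropy under p_{Y_0,Y_j,Z_j}(y_0,y_j,z_j) := ∑_x p(x,z_j)·p(y_0,y_j|x) and η_{0,n} → 0 as n → ∞. -/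

import Mathlib

open Finset Filter

attribute [local instance] Classical.propDecidable

section ProtocolA

variable {𝒳 : Type*} [Fintype 𝒳] (𝒵 : Fin 2 → Type*) [∀ j, Fintype (𝒵 j)]
  (𝒴 : Fin 3 → Type*) [∀ i, Fintype (𝒴 i)] [∀ i, DecidableEq (𝒴 i)]

/-- Probability of an event in Protocol A at blocklength `n`:
`(X^n, Z^n_{[1:2]})` is i.i.d. `φ`, `Y^n_{[0:2]}` is generated coordinatewise through
`p_{Y_{[0:2]}|X}`, and the binnings `𝓑_{M,i}, 𝓑_{F,i}` (`i ∈ [0:2]`) are independent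
uniformly random functions into `[1:Mv i]` resp. `[1:Fv i]`. -/
noncomputable def prA (φ : 𝒳 × (∀ j, 𝒵 j) → ℝ) (pY : 𝒳 → (∀ i, 𝒴 i) → ℝ)
    (Mv Fv : Fin 3 → ℕ) (n : ℕ)
    (E : (Fin n → 𝒳) → (∀ j, Fin n → 𝒵 j) → (Fin n → ∀ i, 𝒴 i) →
      (∀ i, (Fin n → 𝒴 i) → Fin (Mv i)) → (∀ i, (Fin n → 𝒴 i) → Fin (Fv i)) → Prop) :
    ℝ :=
  ∑ x : Fin n → 𝒳, ∑ z : ∀ j, Fin n → 𝒵 j, ∑ y : Fin n → ∀ i, 𝒴 i,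
    ∑ BM : ∀ i, (Fin n → 𝒴 i) → Fin (Mv i), ∑ BF : ∀ i, (Fin n → 𝒴 i) → Fin (Fv i),
      if E x z y BM BF then
        (∏ t, φ (x t, fun j => z j t)) * (∏ t, pY (x t) (y t)) /
          ((Fintype.card (∀ i, (Fin n → 𝒴 i) → Fin (Mv i)) : ℝ) *
            (Fintype.card (∀ i, (Fin n → 𝒴 i) → Fin (Fv i)) : ℝ))
      else 0

/-- Event `𝓔₀`: the joint type of `(X^n, Y^n_{[0:2]})` is entrywise within `δ` of `pXY`. -/
def evE0 (pXY : 𝒳 × (∀ i, 𝒴 i) → ℝ) (δ : ℝ) {n : ℕ}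
    (x : Fin n → 𝒳) (y : Fin n → ∀ i, 𝒴 i) : Prop :=
  ∀ (a : 𝒳) (ys : ∀ i, 𝒴 i),
    |((Finset.univ.filter (fun t : Fin n => x t = a ∧ y t = ys)).card : ℝ) / n -
      pXY (a, ys)| ≤ δ

/-- Entrywise `δ`-typicality of `(y_0^n, y_j^n, z_j^n)` with respect to a pmf `μ` on
`𝒴_0 × 𝒴_j × 𝒵_j`. -/
def typ3 (j : Fin 2) (μ : 𝒴 0 × 𝒴 j.succ × 𝒵 j → ℝ) (δ : ℝ) {n : ℕ}
    (y0 : Fin n → 𝒴 0) (yj : Fin n → 𝒴 j.succ) (zj : Fin n → 𝒵 j) : Prop :=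
  ∀ (u0 : 𝒴 0) (uj : 𝒴 j.succ) (c : 𝒵 j),
    |((Finset.univ.filter
        (fun t : Fin n => y0 t = u0 ∧ yj t = uj ∧ zj t = c)).card : ℝ) / n -
      μ (u0, uj, c)| ≤ δ

/-- The single-letter pmf `p_{Y_0,Y_j,Z_j}(y_0,y_j,z_j) = ∑_x p(x,z_j)·p(y_0,y_j|x)`. -/
noncomputable def pYYZ (p : 𝒳 × (∀ j, 𝒵 j) → ℝ) (pY : 𝒳 → (∀ i, 𝒴 i) → ℝ)
    (j : Fin 2) (w : 𝒴 0 × 𝒴 j.succ × 𝒵 j) : ℝ :=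
  ∑ a : 𝒳, (∑ zz : ∀ j', 𝒵 j', if zz j = w.2.2 then p (a, zz) else 0) *
    (∑ ys : ∀ i, 𝒴 i, if ys 0 = w.1 ∧ ys j.succ = w.2.1 then pY a ys else 0)

/-- Event `𝓔_j`: some pair `(ỹ_0^n, ỹ_j^n)` matches all four bin indices of the true
`(Y_0^n, Y_j^n)` and is jointly `δ`-typical with `Z_j^n`. -/
def evEj (p : 𝒳 × (∀ j, 𝒵 j) → ℝ) (pY : 𝒳 → (∀ i, 𝒴 i) → ℝ) (j : Fin 2) (δ : ℝ)
    {Mv Fv : Fin 3 → ℕ} {n : ℕ}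
    (z : ∀ j', Fin n → 𝒵 j') (y : Fin n → ∀ i, 𝒴 i)
    (BM : ∀ i, (Fin n → 𝒴 i) → Fin (Mv i)) (BF : ∀ i, (Fin n → 𝒴 i) → Fin (Fv i)) :
    Prop :=
  ∃ (y0' : Fin n → 𝒴 0) (yj' : Fin n → 𝒴 j.succ),
    BM 0 y0' = BM 0 (fun t => y t 0) ∧ BF 0 y0' = BF 0 (fun t => y t 0) ∧
    BM j.succ yj' = BM j.succ (fun t => y t j.succ) ∧
    BF j.succ yj' = BF j.succ (fun t => y t j.succ) ∧
    typ3 𝒵 𝒴 j (pYYZ 𝒵 𝒴 p pY j) δ y0' yj' (z j)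

end ProtocolA

/-- Event `Ψ_{0,j}`: the type of `Z_j^n` is entrywise within `δ` of `p_{Z_j}`. -/
def evPsi0 {𝒵j : Type*} [Fintype 𝒵j] (pZj : 𝒵j → ℝ) (δ : ℝ) {n : ℕ}
    (zj : Fin n → 𝒵j) : Prop :=
  ∀ c : 𝒵j,
    |((Finset.univ.filter (fun t : Fin n => zj t = c)).card : ℝ) / n - pZj c| ≤ δ

/-- Event `𝓔_{j,NS,0}`: some `ỹ_0^n ≠ Y_0^n` and `ỹ_j^n ≠ Y_j^n` match all four bin
indices and are jointly `δ`-typical with `Z_j^n`. -/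
def evENS0 {𝒳 : Type*} [Fintype 𝒳] (𝒵 : Fin 2 → Type*) [∀ j, Fintype (𝒵 j)]
    (𝒴 : Fin 3 → Type*) [∀ i, Fintype (𝒴 i)] [∀ i, DecidableEq (𝒴 i)]
    (p : 𝒳 × (∀ j, 𝒵 j) → ℝ) (pY : 𝒳 → (∀ i, 𝒴 i) → ℝ) (j : Fin 2) (δ : ℝ)
    {Mv Fv : Fin 3 → ℕ} {n : ℕ}
    (z : ∀ j', Fin n → 𝒵 j') (y : Fin n → ∀ i, 𝒴 i)
    (BM : ∀ i, (Fin n → 𝒴 i) → Fin (Mv i)) (BF : ∀ i, (Fin n → 𝒴 i) → Fin (Fv i)) :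
    Prop :=
  ∃ (y0' : Fin n → 𝒴 0) (yj' : Fin n → 𝒴 j.succ),
    y0' ≠ (fun t => y t 0) ∧ yj' ≠ (fun t => y t j.succ) ∧
    BM 0 y0' = BM 0 (fun t => y t 0) ∧ BF 0 y0' = BF 0 (fun t => y t 0) ∧
    BM j.succ yj' = BM j.succ (fun t => y t j.succ) ∧
    BF j.succ yj' = BF j.succ (fun t => y t j.succ) ∧
    typ3 𝒵 𝒴 j (pYYZ 𝒵 𝒴 p pY j) δ y0' yj' (z j)

/-!
Union bound over the candidate pairs `(ỹ₀ⁿ, ỹⱼⁿ)` with `ỹ₀ⁿ ≠ Y₀ⁿ` and `ỹⱼⁿ ≠ Yⱼⁿ`: the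
binnings at the two distinct indices `0` and `j + 1` are independent and uniform, so such a pair
collides with `(Y₀ⁿ, Yⱼⁿ)` in all four bin indices for a fraction `1 / (M₀ Mⱼ F₀ Fⱼ)` of the
binnings. As `𝓔₀ ∧ Ψ₀ⱼ` does not involve the binnings, the conditional probability is at most
the number of pairs jointly typical with `Zⱼⁿ`, divided by `M₀ Mⱼ F₀ Fⱼ = 2^{n(R₀+R̃₀+Rⱼ+R̃ⱼ)}`.

That number is at most `2^{n(H(Y₀,Yⱼ|Zⱼ) + η n)}` with `η n → 0`, by a change of measure.
Mixing the conditional law `μ(a | c)` with weight `ε` of the uniform law on `α` gives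
`ν(a | c) ≥ ε / |α|`, and `ν(a | c) ≥ (1 - ε) μ(a | c)`; so `∏ₜ ν(wₜ | zₜ)` is a sub-probability
on sequences `wⁿ` under which every `wⁿ` with at most `n (μ(a, c) + δ)` letters `(a, c)` has
mass at least `2^{-n (H + O(-log (1 - ε)) + O(δ log (|α| / ε)))}`. The mixing is what keeps
`-log ν` bounded on the letters where `μ` vanishes. Choosing `ε`, then `δ`, small makes the
excess exponent arbitrarily small.
-/

open Topology

lemma prod_update_mul_of_mul_eq {ι M : Type*} [Fintype ι] [DecidableEq ι] [CommMonoid M]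
    (g : ι → M) (i : ι) {v k : M} (h : v * k = g i) :
    (∏ j, Function.update g i v j) * k = ∏ j, g j := by
  rw [prod_update_of_mem (mem_univ i), sdiff_singleton_eq_erase,
    ← mul_prod_erase univ g (mem_univ i), ← h, mul_right_comm]

lemma card_filter_apply_eq_apply_mul_card {α β : Type*} [Fintype α] [DecidableEq α]
    [Fintype β] [DecidableEq β] {a b : α} (hab : a ≠ b) :
    #{f : α → β | f a = f b} * Fintype.card β = Fintype.card (α → β) := by
  rw [← card_univ (α := β), ← card_product, ← card_univ]
  refine card_nbij' (fun p => Function.update p.1 a p.2)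
    (fun g => (Function.update g a (g b), g a)) (by simp) ?_ ?_ ?_
  · intro g _
    simp [Function.update_of_ne hab.symm]
  · rintro ⟨f, v⟩ hf
    have hf : f a = f b := by simpa using hf
    simp [Function.update_of_ne hab.symm, hf]
  · intro g _
    simp

lemma card_filter_collision_pair_mul {ι : Type*} [Fintype ι] [DecidableEq ι]
    {γ κ : ι → Type*} [∀ i, Fintype (γ i)] [∀ i, DecidableEq (γ i)]
    [∀ i, Fintype (κ i)] [∀ i, DecidableEq (κ i)] {i₀ i₁ : ι} (hi : i₀ ≠ i₁)
    {a a' : γ i₀} (ha : a ≠ a') {c c' : γ i₁} (hc : c ≠ c') :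
    #{B : ∀ i, γ i → κ i | B i₀ a = B i₀ a' ∧ B i₁ c = B i₁ c'} *
        (Fintype.card (κ i₀) * Fintype.card (κ i₁)) =
      Fintype.card (∀ i, γ i → κ i) := by
  set t₀ : Finset (γ i₀ → κ i₀) := {g | g a = g a'}
  set t₁ : Finset (γ i₁ → κ i₁) := {g | g c = g c'}
  set s₀ := Function.update (fun i => (univ : Finset (γ i → κ i))) i₀ t₀
  have hfilter : ({B : ∀ i, γ i → κ i | B i₀ a = B i₀ a' ∧ B i₁ c = B i₁ c'} : Finset _) =
      Fintype.piFinset (Function.update s₀ i₁ t₁) := by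
    rw [Fintype.piFinset_update_eq_filter_piFinset_mem _ _ (by simp [s₀, hi.symm]),
      Fintype.piFinset_update_eq_filter_piFinset_mem _ _ (subset_univ _),
      Fintype.piFinset_univ, filter_filter]
    simp [t₀, t₁]
  have hcard : ∀ {i} (s : ∀ i, Finset (γ i → κ i)) (t : Finset (γ i → κ i)),
      (fun k => #(Function.update s i t k)) = Function.update (fun k => #(s k)) i #t := by
    intro i s t
    funext k
    rcases eq_or_ne k i with rfl | hk <;> simp [*]
  rw [hfilter, Fintype.card_piFinset, hcard, mul_comm (Fintype.card _), ← mul_assoc,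
    prod_update_mul_of_mul_eq _ _ (by
      simpa [s₀, hi.symm, t₁] using card_filter_apply_eq_apply_mul_card (β := κ i₁) hc),
    hcard, prod_update_mul_of_mul_eq _ _ (by
      simpa [t₀] using card_filter_apply_eq_apply_mul_card (β := κ i₀) ha)]
  simp

lemma card_filter_exists_collision_mul_le {ι : Type*} [Fintype ι] [DecidableEq ι]
    {γ κ κ' : ι → Type*} [∀ i, Fintype (γ i)] [∀ i, DecidableEq (γ i)]
    [∀ i, Fintype (κ i)] [∀ i, DecidableEq (κ i)] [∀ i, Fintype (κ' i)]
    [∀ i, DecidableEq (κ' i)] {i₀ i₁ : ι} (hi : i₀ ≠ i₁) (a : γ i₀) (c : γ i₁)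
    (S : Finset (γ i₀ × γ i₁)) (hS : ∀ w ∈ S, w.1 ≠ a ∧ w.2 ≠ c) :
    #{B : (∀ i, γ i → κ i) × (∀ i, γ i → κ' i) | ∃ w ∈ S,
        B.1 i₀ w.1 = B.1 i₀ a ∧ B.2 i₀ w.1 = B.2 i₀ a ∧
        B.1 i₁ w.2 = B.1 i₁ c ∧ B.2 i₁ w.2 = B.2 i₁ c} *
        (Fintype.card (κ i₀) * Fintype.card (κ i₁) *
          (Fintype.card (κ' i₀) * Fintype.card (κ' i₁))) ≤
      #S * (Fintype.card (∀ i, γ i → κ i) * Fintype.card (∀ i, γ i → κ' i)) := by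
  have hsplit : ∀ w ∈ S,
      #{B : (∀ i, γ i → κ i) × (∀ i, γ i → κ' i) |
          B.1 i₀ w.1 = B.1 i₀ a ∧ B.2 i₀ w.1 = B.2 i₀ a ∧
          B.1 i₁ w.2 = B.1 i₁ c ∧ B.2 i₁ w.2 = B.2 i₁ c} *
        (Fintype.card (κ i₀) * Fintype.card (κ i₁) *
          (Fintype.card (κ' i₀) * Fintype.card (κ' i₁))) =
      Fintype.card (∀ i, γ i → κ i) * Fintype.card (∀ i, γ i → κ' i) := by
    intro w hw
    have hprod : ({B : (∀ i, γ i → κ i) × (∀ i, γ i → κ' i) |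
          B.1 i₀ w.1 = B.1 i₀ a ∧ B.2 i₀ w.1 = B.2 i₀ a ∧
          B.1 i₁ w.2 = B.1 i₁ c ∧ B.2 i₁ w.2 = B.2 i₁ c} :
          Finset ((∀ i, γ i → κ i) × (∀ i, γ i → κ' i))) =
        ({B | B i₀ w.1 = B i₀ a ∧ B i₁ w.2 = B i₁ c} : Finset (∀ i, γ i → κ i)) ×ˢ
          ({B | B i₀ w.1 = B i₀ a ∧ B i₁ w.2 = B i₁ c} : Finset (∀ i, γ i → κ' i)) := by
      ext B
      simp only [mem_filter, mem_univ, true_and, mem_product]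
      tauto
    rw [hprod, card_product, mul_mul_mul_comm,
      card_filter_collision_pair_mul hi (hS w hw).1 (hS w hw).2,
      card_filter_collision_pair_mul hi (hS w hw).1 (hS w hw).2]
  calc _ ≤ (∑ w ∈ S, #{B : (∀ i, γ i → κ i) × (∀ i, γ i → κ' i) |
          B.1 i₀ w.1 = B.1 i₀ a ∧ B.2 i₀ w.1 = B.2 i₀ a ∧
          B.1 i₁ w.2 = B.1 i₁ c ∧ B.2 i₁ w.2 = B.2 i₁ c}) *
        (Fintype.card (κ i₀) * Fintype.card (κ i₁) *
          (Fintype.card (κ' i₀) * Fintype.card (κ' i₁))) := by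
        gcongr
        refine (card_le_card ?_).trans card_biUnion_le
        intro B hB
        simpa using hB
    _ = _ := by rw [sum_mul, sum_congr rfl hsplit, sum_const, smul_eq_mul]

section ConditionalTypes

variable {α C : Type*} [Fintype α]

noncomputable def condEntropy [Fintype C] (μ : α → C → ℝ) : ℝ :=
  -∑ a, ∑ c, μ a c * Real.logb 2 (μ a c / ∑ a', μ a' c)

-- Where the marginal `∑ a', μ a' c` vanishes the division gives `0`: the total mass is then `ε`.
noncomputable def smoothCond (μ : α → C → ℝ) (ε : ℝ) (a : α) (c : C) : ℝ :=
  (1 - ε) * (μ a c / ∑ a', μ a' c) + ε / Fintype.card α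

variable {μ : α → C → ℝ} {ε : ℝ}

lemma condEntropy_nonneg [Fintype C] (hμ : ∀ a c, 0 ≤ μ a c) : 0 ≤ condEntropy μ := by
  rw [condEntropy, neg_nonneg]
  refine sum_nonpos fun a _ => sum_nonpos fun c _ => mul_nonpos_of_nonneg_of_nonpos (hμ a c) ?_
  exact Real.logb_nonpos one_lt_two (div_nonneg (hμ a c) (sum_nonneg fun a' _ => hμ a' c))
    (div_le_one_of_le₀ (single_le_sum (fun a' _ => hμ a' c) (mem_univ a))
      (sum_nonneg fun a' _ => hμ a' c))

lemma div_card_le_smoothCond (hμ : ∀ a c, 0 ≤ μ a c) (hε : ε ≤ 1) (a : α) (c : C) :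
    ε / Fintype.card α ≤ smoothCond μ ε a c := by
  have : 0 ≤ (1 - ε) * (μ a c / ∑ a', μ a' c) :=
    mul_nonneg (sub_nonneg.2 hε) (div_nonneg (hμ a c) (sum_nonneg fun a' _ => hμ a' c))
  rw [smoothCond]
  linarith

lemma sum_smoothCond_le_one (hε₀ : 0 ≤ ε) (hε₁ : ε ≤ 1) (c : C) :
    ∑ a, smoothCond μ ε a c ≤ 1 := by
  have hcond : ∑ a, μ a c / ∑ a', μ a' c ≤ 1 := by
    rw [← sum_div]; exact div_self_le_one _
  have hunif : ∑ _a : α, ε / Fintype.card α ≤ ε := by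
    rw [sum_const, card_univ, nsmul_eq_mul]
    rcases (Fintype.card α).eq_zero_or_pos with h | h
    · simp [h, hε₀]
    · rw [mul_div_cancel₀ _ (by positivity)]
  simp only [smoothCond, sum_add_distrib, ← mul_sum]
  nlinarith

lemma neg_logb_smoothCond_le (hμ : ∀ a c, 0 ≤ μ a c) (hε₀ : 0 < ε) (hε₁ : ε ≤ 1) (a : α)
    (c : C) :
    -Real.logb 2 (smoothCond μ ε a c) ≤ Real.logb 2 (Fintype.card α / ε) := by
  have hα : (0 : ℝ) < Fintype.card α := by exact_mod_cast Fintype.card_pos_iff.2 ⟨a⟩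
  calc _ ≤ -Real.logb 2 (ε / Fintype.card α) := neg_le_neg <|
        Real.logb_le_logb_of_le one_lt_two (by positivity) (div_card_le_smoothCond hμ hε₁ a c)
    _ = _ := by rw [← Real.logb_inv, inv_div]

lemma mul_neg_logb_smoothCond_le (hμ : ∀ a c, 0 ≤ μ a c) (hε₀ : 0 ≤ ε) (hε₁ : ε < 1)
    (a : α) (c : C) :
    μ a c * -Real.logb 2 (smoothCond μ ε a c) ≤
      μ a c * (-Real.logb 2 (1 - ε) - Real.logb 2 (μ a c / ∑ a', μ a' c)) := by
  rcases (hμ a c).eq_or_lt with h | h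
  · simp [← h]
  have hm : 0 < ∑ a', μ a' c := h.trans_le (single_le_sum (fun a' _ => hμ a' c) (mem_univ a))
  have hcond : 0 < (1 - ε) * (μ a c / ∑ a', μ a' c) := by
    have := sub_pos.2 hε₁; positivity
  refine mul_le_mul_of_nonneg_left ?_ h.le
  rw [sub_eq_add_neg, ← neg_add, ← Real.logb_mul (sub_pos.2 hε₁).ne' (div_pos h hm).ne',
    neg_le_neg_iff]
  refine Real.logb_le_logb_of_le one_lt_two hcond ?_
  have : 0 ≤ ε / Fintype.card α := by positivity
  rw [smoothCond]
  linarith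

lemma sum_apply_eq_sum_card_mul [Fintype C] [DecidableEq α] [DecidableEq C] {T : Type*}
    [Fintype T] (w : T → α) (z : T → C) (f : α → C → ℝ) :
    ∑ t, f (w t) (z t) = ∑ a, ∑ c, (#{t | w t = a ∧ z t = c} : ℝ) * f a c := by
  rw [← sum_fiberwise univ (fun t => (w t, z t)), Fintype.sum_prod_type]
  refine sum_congr rfl fun a _ => sum_congr rfl fun c _ => ?_
  rw [← nsmul_eq_mul, ← sum_const]
  refine sum_congr (by simp [Prod.ext_iff]) fun t ht => ?_
  simp only [mem_filter] at ht
  rw [ht.2.1, ht.2.2]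

variable [Fintype C] [DecidableEq α] [DecidableEq C] {T : Type*} [Fintype T]

lemma sum_neg_logb_smoothCond_le (hμ : ∀ a c, 0 ≤ μ a c) (hε₀ : 0 < ε) (hε₁ : ε < 1)
    {δ : ℝ} (hδ : 0 ≤ δ) (w : T → α) (z : T → C)
    (hw : ∀ a c, (#{t | w t = a ∧ z t = c} : ℝ) ≤ Fintype.card T * (μ a c + δ)) :
    ∑ t, -Real.logb 2 (smoothCond μ ε (w t) (z t)) ≤
      Fintype.card T * (condEntropy μ + (∑ a, ∑ c, μ a c) * -Real.logb 2 (1 - ε) +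
        δ * (Fintype.card α * Fintype.card C) * Real.logb 2 (Fintype.card α / ε)) := by
  have hν₁ : ∀ a c, 0 ≤ -Real.logb 2 (smoothCond μ ε a c) := fun a c =>
    neg_nonneg.2 <| Real.logb_nonpos one_lt_two
      ((div_nonneg hε₀.le (Nat.cast_nonneg _)).trans (div_card_le_smoothCond hμ hε₁.le a c))
      ((single_le_sum (fun a' _ => (div_nonneg hε₀.le (Nat.cast_nonneg _)).trans
        (div_card_le_smoothCond hμ hε₁.le a' c)) (mem_univ a)).trans
        (sum_smoothCond_le_one hε₀.le hε₁.le c))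
  have hμpart : ∑ a, ∑ c, μ a c * -Real.logb 2 (smoothCond μ ε a c) ≤
      condEntropy μ + (∑ a, ∑ c, μ a c) * -Real.logb 2 (1 - ε) := by
    calc _ ≤ ∑ a, ∑ c, μ a c * (-Real.logb 2 (1 - ε) - Real.logb 2 (μ a c / ∑ a', μ a' c)) :=
          sum_le_sum fun a _ => sum_le_sum fun c _ =>
            mul_neg_logb_smoothCond_le hμ hε₀.le hε₁ a c
      _ = _ := by simp only [condEntropy, mul_sub, sum_sub_distrib, sum_mul]; ring
  have hδpart : ∑ a, ∑ c, δ * -Real.logb 2 (smoothCond μ ε a c) ≤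
      δ * (Fintype.card α * Fintype.card C) * Real.logb 2 (Fintype.card α / ε) := by
    calc _ ≤ ∑ _a : α, ∑ _c : C, δ * Real.logb 2 (Fintype.card α / ε) :=
          sum_le_sum fun a _ => sum_le_sum fun c _ =>
            mul_le_mul_of_nonneg_left (neg_logb_smoothCond_le hμ hε₀ hε₁.le a c) hδ
      _ = _ := by simp only [sum_const, card_univ, nsmul_eq_mul]; ring
  rw [sum_apply_eq_sum_card_mul w z fun a c => -Real.logb 2 (smoothCond μ ε a c)]
  calc _ ≤ ∑ a, ∑ c, Fintype.card T * (μ a c + δ) * -Real.logb 2 (smoothCond μ ε a c) :=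
        sum_le_sum fun a _ => sum_le_sum fun c _ => mul_le_mul_of_nonneg_right (hw a c) (hν₁ a c)
    _ = Fintype.card T * (∑ a, ∑ c, μ a c * -Real.logb 2 (smoothCond μ ε a c) +
          ∑ a, ∑ c, δ * -Real.logb 2 (smoothCond μ ε a c)) := by
        simp only [mul_assoc, add_mul, ← mul_sum, sum_add_distrib, mul_add]
    _ ≤ _ := mul_le_mul_of_nonneg_left (by linarith) (Nat.cast_nonneg _)

lemma card_le_rpow_of_card_filter_le [DecidableEq T] (hμ : ∀ a c, 0 ≤ μ a c) (hε₀ : 0 < ε)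
    (hε₁ : ε < 1) {δ : ℝ} (hδ : 0 ≤ δ) (z : T → C) (S : Finset (T → α))
    (hS : ∀ w ∈ S, ∀ a c, (#{t | w t = a ∧ z t = c} : ℝ) ≤ Fintype.card T * (μ a c + δ)) :
    (#S : ℝ) ≤ 2 ^ (Fintype.card T * (condEntropy μ + (∑ a, ∑ c, μ a c) * -Real.logb 2 (1 - ε) +
        δ * (Fintype.card α * Fintype.card C) * Real.logb 2 (Fintype.card α / ε))) := by
  set x := Fintype.card T * (condEntropy μ + (∑ a, ∑ c, μ a c) * -Real.logb 2 (1 - ε) +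
        δ * (Fintype.card α * Fintype.card C) * Real.logb 2 (Fintype.card α / ε))
  have hν : ∀ a c, 0 < smoothCond μ ε a c := fun a c =>
    (div_pos hε₀ (by exact_mod_cast Fintype.card_pos_iff.2 ⟨a⟩)).trans_le
      (div_card_le_smoothCond hμ hε₁.le a c)
  have hlow : ∀ w ∈ S, (2 : ℝ) ^ (-x) ≤ ∏ t, smoothCond μ ε (w t) (z t) := by
    intro w hw
    have hprod : ∏ t, smoothCond μ ε (w t) (z t) =
        2 ^ (-∑ t, -Real.logb 2 (smoothCond μ ε (w t) (z t))) := by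
      rw [sum_neg_distrib, neg_neg, Real.rpow_sum_of_pos two_pos]
      exact prod_congr rfl fun t _ => (Real.rpow_logb two_pos one_lt_two.ne' (hν _ _)).symm
    rw [hprod]
    exact Real.rpow_le_rpow_of_exponent_le one_le_two <| neg_le_neg <|
      sum_neg_logb_smoothCond_le hμ hε₀ hε₁ hδ w z (hS w hw)
  have htotal : ∑ w : T → α, ∏ t, smoothCond μ ε (w t) (z t) ≤ 1 := by
    rw [← Fintype.prod_sum (fun t a => smoothCond μ ε a (z t))]
    exact prod_le_one (fun t _ => sum_nonneg fun a _ => (hν _ _).le)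
      fun t _ => sum_smoothCond_le_one hε₀.le hε₁.le (z t)
  have : (#S : ℝ) * 2 ^ (-x) ≤ 1 := by
    calc (#S : ℝ) * 2 ^ (-x) = ∑ _w ∈ S, (2 : ℝ) ^ (-x) := by rw [sum_const, nsmul_eq_mul]
      _ ≤ ∑ w ∈ S, ∏ t, smoothCond μ ε (w t) (z t) := sum_le_sum hlow
      _ ≤ ∑ w : T → α, ∏ t, smoothCond μ ε (w t) (z t) :=
          sum_le_sum_of_subset_of_nonneg (subset_univ S) fun w _ _ =>
            prod_nonneg fun t _ => (hν _ _).le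
      _ ≤ 1 := htotal
  rwa [Real.rpow_neg zero_le_two, ← div_eq_mul_inv, div_le_one (by positivity)] at this
lemma exists_pos_card_le_rpow (hμ : ∀ a c, 0 ≤ μ a c) {ε : ℝ} (hε : 0 < ε) :
    ∃ δ > 0, ∀ (n : ℕ) (z : Fin n → C) (S : Finset (Fin n → α)),
      (∀ w ∈ S, ∀ a c, (#{t | w t = a ∧ z t = c} : ℝ) ≤ n * (μ a c + δ)) →
        (#S : ℝ) ≤ 2 ^ (n * (condEntropy μ + ε)) := by
  set m := ∑ a, ∑ c, μ a c
  have hcont : Tendsto (fun e : ℝ => m * -Real.logb 2 (1 - e)) (𝓝[>] 0) (𝓝 0) := by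
    have : ContinuousAt (fun e : ℝ => m * -Real.logb 2 (1 - e)) 0 :=
      (continuousAt_const.sub continuousAt_id).logb (by norm_num) |>.neg |>.const_mul m
    simpa using this.tendsto.mono_left nhdsWithin_le_nhds
  obtain ⟨ε₁, hε₁small, hε₁⟩ :=
    ((hcont.eventually (gt_mem_nhds (half_pos hε))).and (Ioo_mem_nhdsGT one_pos)).exists
  set L := (Fintype.card α * Fintype.card C : ℝ) * Real.logb 2 (Fintype.card α / ε₁)
  refine ⟨ε / 2 / (|L| + 1), by positivity, fun n z S hS => ?_⟩
  have hδL : ε / 2 / (|L| + 1) * L ≤ ε / 2 := by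
    calc _ ≤ ε / 2 / (|L| + 1) * (|L| + 1) := by gcongr; linarith [le_abs_self L]
      _ = ε / 2 := div_mul_cancel₀ _ (by positivity)
  refine (card_le_rpow_of_card_filter_le hμ hε₁.1 hε₁.2 (δ := ε / 2 / (|L| + 1))
    (by positivity) z S (by simpa using hS)).trans
    (Real.rpow_le_rpow_of_exponent_le one_le_two ?_)
  rw [Fintype.card_fin]
  refine mul_le_mul_of_nonneg_left ?_ (Nat.cast_nonneg n)
  linarith [mul_assoc (ε / 2 / (|L| + 1)) (Fintype.card α * Fintype.card C : ℝ)
    (Real.logb 2 (Fintype.card α / ε₁))]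

lemma le_two_rpow_mul_add_max {T : ℝ} (hT : 0 ≤ T) {n : ℕ} (hn : 0 < n) (H : ℝ) :
    T ≤ 2 ^ (n * (H + max 0 (Real.logb 2 T / n - H))) := by
  rcases hT.eq_or_lt with rfl | hT
  · positivity
  calc T = 2 ^ Real.logb 2 T := (Real.rpow_logb two_pos one_lt_two.ne' hT).symm
    _ ≤ _ := by
      refine Real.rpow_le_rpow_of_exponent_le one_le_two ?_
      calc Real.logb 2 T = n * (Real.logb 2 T / n) := by field_simp
        _ ≤ _ := by gcongr; linarith [le_max_right 0 (Real.logb 2 T / n - H)]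

lemma logb_le_of_le_two_rpow {T x : ℝ} (hT : 0 ≤ T) (hx : 0 ≤ x) (h : T ≤ 2 ^ x) :
    Real.logb 2 T ≤ x := by
  rcases hT.eq_or_lt with rfl | hT
  · simpa using hx
  simpa using Real.logb_le_logb_of_le one_lt_two hT h

lemma exists_tendsto_card_le_rpow (hμ : ∀ a c, 0 ≤ μ a c) {δ : ℕ → ℝ}
    (hδ : Tendsto δ atTop (𝓝 0)) (S : ∀ n, (Fin n → C) → Finset (Fin n → α))
    (hS : ∀ n z, ∀ w ∈ S n z, ∀ a c, (#{t | w t = a ∧ z t = c} : ℝ) ≤ n * (μ a c + δ n)) :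
    ∃ η : ℕ → ℝ, Tendsto η atTop (𝓝 0) ∧
      ∀ n z, (#(S n z) : ℝ) ≤ 2 ^ (n * (condEntropy μ + η n)) := by
  set H := condEntropy μ
  set Smax : ℕ → ℕ := fun n => univ.sup fun z => #(S n z)
  refine ⟨fun n => max 0 (Real.logb 2 (Smax n) / n - H), ?_, fun n z => ?_⟩
  · refine tendsto_order.2 ⟨fun b hb => Eventually.of_forall fun n => hb.trans_le
      (le_max_left _ _), fun b hb => ?_⟩
    obtain ⟨δ₀, hδ₀, hcard⟩ := exists_pos_card_le_rpow hμ (half_pos hb)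
    filter_upwards [hδ.eventually (eventually_le_nhds hδ₀), eventually_ge_atTop 1]
      with n hδn hn
    have hSmax : (Smax n : ℝ) ≤ 2 ^ (n * (H + b / 2)) := by
      rcases (univ : Finset (Fin n → C)).eq_empty_or_nonempty with he | hne
      · simp only [Smax, he, sup_empty, bot_eq_zero', CharP.cast_eq_zero]
        positivity
      obtain ⟨z, -, hz⟩ := exists_mem_eq_sup _ hne fun z => #(S n z)
      simp only [Smax, hz]
      exact hcard n z (S n z) fun w hw a c =>
        (hS n z w hw a c).trans (by gcongr)
    have hlog := logb_le_of_le_two_rpow (Nat.cast_nonneg _)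
      (by have := condEntropy_nonneg hμ; positivity) hSmax
    have hn' : (0 : ℝ) < n := by exact_mod_cast hn
    refine max_lt hb ?_
    rw [sub_lt_iff_lt_add, div_lt_iff₀ hn']
    nlinarith
  · have hle : (#(S n z) : ℝ) ≤ Smax n := by
      exact_mod_cast le_sup (f := fun z => #(S n z)) (mem_univ z)
    rcases n.eq_zero_or_pos with rfl | hn
    · simpa using (card_le_univ (S 0 z)).trans (by simp)
    exact hle.trans (le_two_rpow_mul_add_max (Nat.cast_nonneg _) hn H)

end ConditionalTypes

lemma condEntropy_assoc {A B C : Type*} [Fintype A] [Fintype B] [Fintype C]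
    (ν : A × B × C → ℝ) :
    condEntropy (fun (a : A × B) c => ν (a.1, a.2, c)) =
      -∑ w : A × B × C, ν w * Real.logb 2 (ν w / ∑ u, ∑ v, ν (u, v, w.2.2)) := by
  simp only [condEntropy, Fintype.sum_prod_type]

section JointTypicality

variable (𝒵 : Fin 2 → Type*) (𝒴 : Fin 3 → Type*) [∀ i, DecidableEq (𝒴 i)]

lemma card_filter_le_of_typ3 {j : Fin 2} {μ : 𝒴 0 × 𝒴 j.succ × 𝒵 j → ℝ} {δ : ℝ} {n : ℕ}
    {w : Fin n → 𝒴 0 × 𝒴 j.succ} {z : Fin n → 𝒵 j}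
    (h : typ3 𝒵 𝒴 j μ δ (fun t => (w t).1) (fun t => (w t).2) z) (a : 𝒴 0 × 𝒴 j.succ)
    (c : 𝒵 j) : (#{t | w t = a ∧ z t = c} : ℝ) ≤ n * (μ (a.1, a.2, c) + δ) := by
  have hcard : #{t | w t = a ∧ z t = c} = #{t | (w t).1 = a.1 ∧ (w t).2 = a.2 ∧ z t = c} := by
    congr 1; ext t; simp [Prod.ext_iff, and_assoc]
  rcases n.eq_zero_or_pos with rfl | hn
  · simp
  rw [hcard, ← div_le_iff₀' (by exact_mod_cast hn)]
  linarith [(abs_le.1 (h a.1 a.2 c)).2]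

lemma card_filter_typ3_eq [∀ i, Fintype (𝒴 i)] (j : Fin 2) (μ : 𝒴 0 × 𝒴 j.succ × 𝒵 j → ℝ)
    (δ : ℝ) {n : ℕ} (z : Fin n → 𝒵 j) :
    #{w : (Fin n → 𝒴 0) × (Fin n → 𝒴 j.succ) | typ3 𝒵 𝒴 j μ δ w.1 w.2 z} =
      #{w : Fin n → 𝒴 0 × 𝒴 j.succ |
        typ3 𝒵 𝒴 j μ δ (fun t => (w t).1) (fun t => (w t).2) z} :=
  card_equiv (Equiv.arrowProdEquivProdArrow _ _ _).symm fun _ => by simp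

end JointTypicality

section ProtocolA

variable {𝒳 : Type*} [Fintype 𝒳] (𝒵 : Fin 2 → Type*) [∀ j, Fintype (𝒵 j)]
  (𝒴 : Fin 3 → Type*) [∀ i, Fintype (𝒴 i)] [∀ i, DecidableEq (𝒴 i)]

lemma pYYZ_nonneg {p : 𝒳 × (∀ j, 𝒵 j) → ℝ} {pY : 𝒳 → (∀ i, 𝒴 i) → ℝ} (hp : ∀ w, 0 ≤ p w)
    (hpY : ∀ a ys, 0 ≤ pY a ys) (j : Fin 2) (w : 𝒴 0 × 𝒴 j.succ × 𝒵 j) :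
    0 ≤ pYYZ 𝒵 𝒴 p pY j w :=
  sum_nonneg fun a _ => mul_nonneg (sum_nonneg fun zz _ => by split_ifs <;> simp [hp])
    (sum_nonneg fun ys _ => by split_ifs <;> simp [hpY])

variable {φ : 𝒳 × (∀ j, 𝒵 j) → ℝ} {pY : 𝒳 → (∀ i, 𝒴 i) → ℝ}

lemma prA_nonneg (hφ : ∀ w, 0 ≤ φ w) (hpY : ∀ a ys, 0 ≤ pY a ys) (Mv Fv : Fin 3 → ℕ) (n : ℕ)
    (E : (Fin n → 𝒳) → (∀ j, Fin n → 𝒵 j) → (Fin n → ∀ i, 𝒴 i) →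
      (∀ i, (Fin n → 𝒴 i) → Fin (Mv i)) → (∀ i, (Fin n → 𝒴 i) → Fin (Fv i)) → Prop) :
    0 ≤ prA 𝒵 𝒴 φ pY Mv Fv n E := by
  unfold prA
  refine sum_nonneg fun x _ => sum_nonneg fun z _ => sum_nonneg fun y _ =>
    sum_nonneg fun BM _ => sum_nonneg fun BF _ => ?_
  split_ifs
  · exact div_nonneg (mul_nonneg (prod_nonneg fun t _ => hφ _) (prod_nonneg fun t _ => hpY _ _))
      (by positivity)
  · exact le_rfl

lemma prA_and_le_mul (hφ : ∀ w, 0 ≤ φ w) (hpY : ∀ a ys, 0 ≤ pY a ys) (Mv Fv : Fin 3 → ℕ)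
    (n : ℕ)
    (E : (Fin n → 𝒳) → (∀ j, Fin n → 𝒵 j) → (Fin n → ∀ i, 𝒴 i) →
      (∀ i, (Fin n → 𝒴 i) → Fin (Mv i)) → (∀ i, (Fin n → 𝒴 i) → Fin (Fv i)) → Prop)
    (E' : (Fin n → 𝒳) → (∀ j, Fin n → 𝒵 j) → (Fin n → ∀ i, 𝒴 i) → Prop) {c : ℝ}
    (hE : ∀ x z y, E' x z y →
      (#{B : (∀ i, (Fin n → 𝒴 i) → Fin (Mv i)) × (∀ i, (Fin n → 𝒴 i) → Fin (Fv i)) |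
          E x z y B.1 B.2} : ℝ) ≤
        c * (Fintype.card (∀ i, (Fin n → 𝒴 i) → Fin (Mv i)) *
          Fintype.card (∀ i, (Fin n → 𝒴 i) → Fin (Fv i)))) :
    prA 𝒵 𝒴 φ pY Mv Fv n (fun x z y BM BF => E x z y BM BF ∧ E' x z y) ≤
      c * prA 𝒵 𝒴 φ pY Mv Fv n (fun x z y _ _ => E' x z y) := by
  unfold prA
  simp only [mul_sum]
  refine sum_le_sum fun x _ => sum_le_sum fun z _ => sum_le_sum fun y _ => ?_
  by_cases h' : E' x z y
  · set D : ℝ := (Fintype.card (∀ i, (Fin n → 𝒴 i) → Fin (Mv i)) : ℝ) *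
      Fintype.card (∀ i, (Fin n → 𝒴 i) → Fin (Fv i))
    set v : ℝ := (∏ t, φ (x t, fun j => z j t)) * ∏ t, pY (x t) (y t)
    have hv : 0 ≤ v := mul_nonneg (prod_nonneg fun t _ => hφ _) (prod_nonneg fun t _ => hpY _ _)
    simp only [h', and_true, if_true]
    rw [← Fintype.sum_prod_type', ← sum_filter, sum_const, nsmul_eq_mul, sum_const, sum_const,
      card_univ, card_univ, nsmul_eq_mul, nsmul_eq_mul, ← mul_assoc]
    calc _ ≤ c * D * (v / D) := mul_le_mul_of_nonneg_right (hE x z y h') (by positivity)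
      _ = _ := by ring
  · simp [h']

lemma card_filter_evENS0_mul_le (p : 𝒳 × (∀ j, 𝒵 j) → ℝ) (pY : 𝒳 → (∀ i, 𝒴 i) → ℝ)
    (j : Fin 2) (δ : ℝ) {Mv Fv : Fin 3 → ℕ} {n : ℕ} (z : ∀ j', Fin n → 𝒵 j')
    (y : Fin n → ∀ i, 𝒴 i) :
    #{B : (∀ i, (Fin n → 𝒴 i) → Fin (Mv i)) × (∀ i, (Fin n → 𝒴 i) → Fin (Fv i)) |
        evENS0 𝒵 𝒴 p pY j δ z y B.1 B.2} * (Mv 0 * Mv j.succ * (Fv 0 * Fv j.succ)) ≤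
      #{w : (Fin n → 𝒴 0) × (Fin n → 𝒴 j.succ) |
          typ3 𝒵 𝒴 j (pYYZ 𝒵 𝒴 p pY j) δ w.1 w.2 (z j)} *
        (Fintype.card (∀ i, (Fin n → 𝒴 i) → Fin (Mv i)) *
          Fintype.card (∀ i, (Fin n → 𝒴 i) → Fin (Fv i))) := by
  set S : Finset ((Fin n → 𝒴 0) × (Fin n → 𝒴 j.succ)) :=
    {w | typ3 𝒵 𝒴 j (pYYZ 𝒵 𝒴 p pY j) δ w.1 w.2 (z j) ∧
      w.1 ≠ (fun t => y t 0) ∧ w.2 ≠ (fun t => y t j.succ)}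
  have hcoll := card_filter_exists_collision_mul_le (γ := fun i => Fin n → 𝒴 i)
    (κ := fun i => Fin (Mv i)) (κ' := fun i => Fin (Fv i)) (Fin.succ_ne_zero j).symm
    (fun t => y t 0) (fun t => y t j.succ) S (fun w hw => by simp_all [S])
  simp only [Fintype.card_fin] at hcoll
  calc _ ≤ _ := Nat.mul_le_mul_right _ (card_le_card fun B hB => ?_)
    _ ≤ _ := hcoll
    _ ≤ _ := Nat.mul_le_mul_right _ (card_le_card fun w hw => by simp_all [S])
  obtain ⟨y0', yj', hne0, hnej, hM0, hF0, hMj, hFj, htyp⟩ := (mem_filter.1 hB).2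
  exact mem_filter.2 ⟨mem_univ _, ⟨y0', yj'⟩, by simp [S, *], hM0, hF0, hMj, hFj⟩

lemma card_filter_evENS0_le (p : 𝒳 × (∀ j, 𝒵 j) → ℝ) (pY : 𝒳 → (∀ i, 𝒴 i) → ℝ)
    (j : Fin 2) (δ : ℝ) {Mv Fv : Fin 3 → ℕ} {n : ℕ} {R Rt : Fin 3 → ℝ}
    (hM : ∀ i, (Mv i : ℝ) = 2 ^ ((n : ℝ) * R i)) (hF : ∀ i, (Fv i : ℝ) = 2 ^ ((n : ℝ) * Rt i))
    (z : ∀ j', Fin n → 𝒵 j') (y : Fin n → ∀ i, 𝒴 i) {h : ℝ}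
    (htyp : (#{w : Fin n → 𝒴 0 × 𝒴 j.succ | typ3 𝒵 𝒴 j (pYYZ 𝒵 𝒴 p pY j) δ
      (fun t => (w t).1) (fun t => (w t).2) (z j)} : ℝ) ≤ 2 ^ (n * h)) :
    (#{B : (∀ i, (Fin n → 𝒴 i) → Fin (Mv i)) × (∀ i, (Fin n → 𝒴 i) → Fin (Fv i)) |
        evENS0 𝒵 𝒴 p pY j δ z y B.1 B.2} : ℝ) ≤
      2 ^ (-(n : ℝ) * (R 0 + Rt 0 + R j.succ + Rt j.succ - h)) *
        (Fintype.card (∀ i, (Fin n → 𝒴 i) → Fin (Mv i)) *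
          Fintype.card (∀ i, (Fin n → 𝒴 i) → Fin (Fv i))) := by
  have hbins : (Mv 0 * Mv j.succ * (Fv 0 * Fv j.succ) : ℝ) =
      2 ^ (n * (R 0 + Rt 0 + R j.succ + Rt j.succ)) := by
    simp only [hM, hF, ← Real.rpow_add two_pos]; ring_nf
  have hcoll := card_filter_evENS0_mul_le 𝒵 𝒴 p pY j δ (Mv := Mv) (Fv := Fv) z y
  rw [card_filter_typ3_eq] at hcoll
  have hexp : (2 : ℝ) ^ (-(n : ℝ) * (R 0 + Rt 0 + R j.succ + Rt j.succ - h)) =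
      2 ^ (n * h) / 2 ^ (n * (R 0 + Rt 0 + R j.succ + Rt j.succ)) := by
    rw [← Real.rpow_sub two_pos]; ring_nf
  rw [hexp, ← hbins, div_mul_eq_mul_div, le_div_iff₀ (by rw [hbins]; positivity)]
  have hcoll' := (Nat.cast_le (α := ℝ)).2 hcoll
  push_cast at hcoll'
  exact hcoll'.trans (by gcongr)

end ProtocolA

theorem stmt_17_general {𝒳 : Type*} [Fintype 𝒳] (𝒵 : Fin 2 → Type*) [∀ j, Fintype (𝒵 j)]
    (𝒴 : Fin 3 → Type*) [∀ i, Fintype (𝒴 i)] [∀ i, DecidableEq (𝒴 i)]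
    (p q : 𝒳 × (∀ j, 𝒵 j) → ℝ)
    (hp0 : ∀ w, 0 ≤ p w)
    (hq0 : ∀ w, 0 ≤ q w)
    (pY : 𝒳 → (∀ i, 𝒴 i) → ℝ)
    (hpY0 : ∀ a ys, 0 ≤ pY a ys)
    (R Rt : Fin 3 → ℝ)
    (M F : ℕ → Fin 3 → ℕ)
    (hM : ∀ n i, (M n i : ℝ) = 2 ^ ((n : ℝ) * R i))
    (hF : ∀ n i, (F n i : ℝ) = 2 ^ ((n : ℝ) * Rt i))
    (δ' : ℕ → ℝ) (hδ'0 : Tendsto δ' atTop (nhds 0))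
    (j : Fin 2) :
    ∃ η : ℕ → ℝ, Tendsto η atTop (nhds 0) ∧
      ∀ n : ℕ,
        prA 𝒵 𝒴 q pY (M n) (F n) n (fun x z y BM BF =>
            evENS0 𝒵 𝒴 p pY j (δ' n) z y BM BF ∧
            evE0 𝒴 (fun w => (∑ zz : ∀ j', 𝒵 j', p (w.1, zz)) * pY w.1 w.2) (δ' n) x y ∧
            evPsi0 (fun c => ∑ a : 𝒳, ∑ zz : ∀ j', 𝒵 j',
              if zz j = c then p (a, zz) else 0) (δ' n) (z j)) /
          prA 𝒵 𝒴 q pY (M n) (F n) n (fun x z y _BM _BF =>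
            evE0 𝒴 (fun w => (∑ zz : ∀ j', 𝒵 j', p (w.1, zz)) * pY w.1 w.2) (δ' n) x y ∧
            evPsi0 (fun c => ∑ a : 𝒳, ∑ zz : ∀ j', 𝒵 j',
              if zz j = c then p (a, zz) else 0) (δ' n) (z j)) ≤
        (2 : ℝ) ^ (-(n : ℝ) * (R 0 + Rt 0 + R j.succ + Rt j.succ -
          (-∑ w : 𝒴 0 × 𝒴 j.succ × 𝒵 j, pYYZ 𝒵 𝒴 p pY j w *
            Real.logb 2 (pYYZ 𝒵 𝒴 p pY j w /
              ∑ u0 : 𝒴 0, ∑ uj : 𝒴 j.succ, pYYZ 𝒵 𝒴 p pY j (u0, uj, w.2.2))) -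
          η n)) := by
  obtain ⟨η, hη, htyp⟩ := exists_tendsto_card_le_rpow
    (μ := fun (a : 𝒴 0 × 𝒴 j.succ) c => pYYZ 𝒵 𝒴 p pY j (a.1, a.2, c))
    (fun a c => pYYZ_nonneg 𝒵 𝒴 hp0 hpY0 j _) hδ'0
    (fun n z => {w | typ3 𝒵 𝒴 j (pYYZ 𝒵 𝒴 p pY j) (δ' n) (fun t => (w t).1) (fun t => (w t).2)
      z})
    (fun n z w hw => card_filter_le_of_typ3 𝒵 𝒴 (mem_filter.1 hw).2)
  refine ⟨η, hη, fun n => div_le_of_le_mul₀ (prA_nonneg 𝒵 𝒴 hq0 hpY0 _ _ _ _) (by positivity)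
    (prA_and_le_mul 𝒵 𝒴 hq0 hpY0 _ _ _ (fun x z y BM BF => evENS0 𝒵 𝒴 p pY j (δ' n) z y BM BF) _
      fun x z y _ => ?_)⟩
  rw [← condEntropy_assoc, sub_sub]
  exact card_filter_evENS0_le 𝒵 𝒴 p pY j (δ' n) (hM n) (hF n) z y (htyp n (z j))

/-- **binning collision bound in the dual protocol.** Under the
alternative hypothesis, `P_q(𝓔_{j,NS,0} | 𝓔₀ ∧ Ψ_{0,j}) ≤
2^{−n(R_0 + R̃_0 + R_j + R̃_j − H(Y_0,Y_j|Z_j) − η_{0,n})}` for some `η_{0,n} → 0`. -/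
theorem stmt_17 {𝒳 : Type*} [Fintype 𝒳] (𝒵 : Fin 2 → Type*) [∀ j, Fintype (𝒵 j)]
    (𝒴 : Fin 3 → Type*) [∀ i, Fintype (𝒴 i)] [∀ i, DecidableEq (𝒴 i)]
    (p q : 𝒳 × (∀ j, 𝒵 j) → ℝ)
    (hp0 : ∀ w, 0 ≤ p w) (hp1 : ∑ w, p w = 1)
    (hq0 : ∀ w, 0 ≤ q w) (hq1 : ∑ w, q w = 1)
    (hmarg : ∀ a : 𝒳, ∑ zz : ∀ j, 𝒵 j, p (a, zz) = ∑ zz : ∀ j, 𝒵 j, q (a, zz))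
    (pY : 𝒳 → (∀ i, 𝒴 i) → ℝ)
    (hpY0 : ∀ a ys, 0 ≤ pY a ys) (hpY1 : ∀ a, ∑ ys : ∀ i, 𝒴 i, pY a ys = 1)
    (R Rt : Fin 3 → ℝ) (hR : ∀ i, 0 ≤ R i) (hRt : ∀ i, 0 ≤ Rt i)
    (M F : ℕ → Fin 3 → ℕ)
    (hM : ∀ n i, (M n i : ℝ) = 2 ^ ((n : ℝ) * R i))
    (hF : ∀ n i, (F n i : ℝ) = 2 ^ ((n : ℝ) * Rt i))
    (δ' : ℕ → ℝ) (hδ'pos : ∀ n, 0 < δ' n) (hδ'0 : Tendsto δ' atTop (nhds 0))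
    (j : Fin 2) :
    ∃ η : ℕ → ℝ, Tendsto η atTop (nhds 0) ∧
      ∀ n : ℕ,
        prA 𝒵 𝒴 q pY (M n) (F n) n (fun x z y BM BF =>
            evENS0 𝒵 𝒴 p pY j (δ' n) z y BM BF ∧
            evE0 𝒴 (fun w => (∑ zz : ∀ j', 𝒵 j', p (w.1, zz)) * pY w.1 w.2) (δ' n) x y ∧
            evPsi0 (fun c => ∑ a : 𝒳, ∑ zz : ∀ j', 𝒵 j',
              if zz j = c then p (a, zz) else 0) (δ' n) (z j)) /
          prA 𝒵 𝒴 q pY (M n) (F n) n (fun x z y _BM _BF =>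
            evE0 𝒴 (fun w => (∑ zz : ∀ j', 𝒵 j', p (w.1, zz)) * pY w.1 w.2) (δ' n) x y ∧
            evPsi0 (fun c => ∑ a : 𝒳, ∑ zz : ∀ j', 𝒵 j',
              if zz j = c then p (a, zz) else 0) (δ' n) (z j)) ≤
        (2 : ℝ) ^ (-(n : ℝ) * (R 0 + Rt 0 + R j.succ + Rt j.succ -
          (-∑ w : 𝒴 0 × 𝒴 j.succ × 𝒵 j, pYYZ 𝒵 𝒴 p pY j w *
            Real.logb 2 (pYYZ 𝒵 𝒴 p pY j w /
              ∑ u0 : 𝒴 0, ∑ uj : 𝒴 j.succ, pYYZ 𝒵 𝒴 p pY j (u0, uj, w.2.2))) -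
          η n)) :=
  stmt_17_general 𝒵 𝒴 p q hp0 hq0 pY hpY0 R Rt M F hM hF δ' hδ'0 j
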